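/- arXiv:1510.01314 — 3 statements merged into one kernel-verified Lean document; each statement's English description precedes it below -/
import Mathlib

section
/- For all real x, y and ν ∈ [0,1]: (1/2)·ν·(1−ν)·(x−y)²·min(exp x, exp y) ≤ (1−ν)·exp x + ν·exp y − exp((1−ν)·x + ν·y) ≤ (1/2)·ν·(1−ν)·(x−y)²·max(exp x, exp y). -/
/-!
Subtracting `m / 2 * x ^ 2` from `f` lowers its second derivative by `m`, and the Jensen gap of
`x ↦ x ^ 2` is exactly `ν (1 - ν) (x - y) ^ 2`. So `m ≤ f''` on `[x, y]` makes the Jensen gap of `f`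
at least `m / 2 * ν (1 - ν) (x - y) ^ 2` (strong convexity), and `f'' ≤ M` bounds it by
`M / 2 * ν (1 - ν) (x - y) ^ 2`. For `f = exp` take `m, M` the minimum and maximum of `exp` on `[x, y]`.
-/

open Set

lemma strongConvexOn_of_hasDerivWithinAt2_ge {D : Set ℝ} (hD : Convex ℝ D) {f f' f'' : ℝ → ℝ}
    {m : ℝ} (hf : ContinuousOn f D)
    (hf' : ∀ x ∈ interior D, HasDerivWithinAt f (f' x) (interior D) x)
    (hf'' : ∀ x ∈ interior D, HasDerivWithinAt f' (f'' x) (interior D) x)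
    (hm : ∀ x ∈ interior D, m ≤ f'' x) : StrongConvexOn D m f := by
  simp_rw [strongConvexOn_iff_convex, Real.norm_eq_abs, sq_abs]
  refine convexOn_of_hasDerivWithinAt2_nonneg (f' := fun x ↦ f' x - m * x)
    (f'' := fun x ↦ f'' x - m) hD (hf.sub (by fun_prop)) (fun x hx ↦ ?_) (fun x hx ↦ ?_)
    (fun x hx ↦ sub_nonneg.2 (hm x hx))
  · exact ((hf' x hx).sub ((hasDerivWithinAt_pow 2 x).const_mul (m / 2))).congr_deriv
      (by push_cast; ring)
  · exact ((hf'' x hx).sub ((hasDerivWithinAt_id x _).const_mul m)).congr_deriv (by ring)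

lemma strongConcaveOn_neg_of_hasDerivWithinAt2_le {D : Set ℝ} (hD : Convex ℝ D)
    {f f' f'' : ℝ → ℝ} {M : ℝ} (hf : ContinuousOn f D)
    (hf' : ∀ x ∈ interior D, HasDerivWithinAt f (f' x) (interior D) x)
    (hf'' : ∀ x ∈ interior D, HasDerivWithinAt f' (f'' x) (interior D) x)
    (hM : ∀ x ∈ interior D, f'' x ≤ M) : StrongConcaveOn D (-M) f := by
  have := strongConvexOn_of_hasDerivWithinAt2_ge (f := -f) (f' := -f') (f'' := -f'') hD hf.neg
    (fun x hx ↦ (hf' x hx).neg) (fun x hx ↦ (hf'' x hx).neg) (fun x hx ↦ neg_le_neg (hM x hx))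
  simpa [StrongConcaveOn, neg_div] using this.neg

section JensenGap

variable {s : Set ℝ} {f : ℝ → ℝ} {x y ν : ℝ}

lemma StrongConvexOn.le_jensen_gap {m : ℝ} (hf : StrongConvexOn s m f) (hx : x ∈ s)
    (hy : y ∈ s) (hν : ν ∈ Icc (0 : ℝ) 1) :
    1 / 2 * ν * (1 - ν) * (x - y) ^ 2 * m ≤ (1 - ν) * f x + ν * f y - f ((1 - ν) * x + ν * y) := by
  have := hf.2 hx hy (sub_nonneg.2 hν.2) hν.1 (sub_add_cancel 1 ν)
  simp only [smul_eq_mul, Real.norm_eq_abs, sq_abs] at this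
  linarith

lemma StrongConcaveOn.jensen_gap_le {M : ℝ} (hf : StrongConcaveOn s (-M) f) (hx : x ∈ s)
    (hy : y ∈ s) (hν : ν ∈ Icc (0 : ℝ) 1) :
    (1 - ν) * f x + ν * f y - f ((1 - ν) * x + ν * y) ≤ 1 / 2 * ν * (1 - ν) * (x - y) ^ 2 * M := by
  have := hf.2 hx hy (sub_nonneg.2 hν.2) hν.1 (sub_add_cancel 1 ν)
  simp only [smul_eq_mul, Real.norm_eq_abs, sq_abs] at this
  linarith

end JensenGap

section Exp

variable {x y : ℝ}

lemma strongConvexOn_exp_uIcc :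
    StrongConvexOn (uIcc x y) (min (Real.exp x) (Real.exp y)) Real.exp :=
  strongConvexOn_of_hasDerivWithinAt2_ge (convex_uIcc x y) Real.continuous_exp.continuousOn
    (fun z _ ↦ (Real.hasDerivAt_exp z).hasDerivWithinAt)
    (fun z _ ↦ (Real.hasDerivAt_exp z).hasDerivWithinAt)
    (fun _ hz ↦ (Real.exp_monotone.mapsTo_uIcc (interior_subset hz)).1)

lemma strongConcaveOn_exp_uIcc :
    StrongConcaveOn (uIcc x y) (-max (Real.exp x) (Real.exp y)) Real.exp :=
  strongConcaveOn_neg_of_hasDerivWithinAt2_le (convex_uIcc x y) Real.continuous_exp.continuousOn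
    (fun z _ ↦ (Real.hasDerivAt_exp z).hasDerivWithinAt)
    (fun z _ ↦ (Real.hasDerivAt_exp z).hasDerivWithinAt)
    (fun _ hz ↦ (Real.exp_monotone.mapsTo_uIcc (interior_subset hz)).2)

end Exp

theorem stmt_7 (x y : ℝ) (ν : ℝ) (hν : ν ∈ Set.Icc (0:ℝ) 1) :
    1/2 * ν * (1 - ν) * (x - y)^2 * min (Real.exp x) (Real.exp y)
      ≤ (1 - ν) * Real.exp x + ν * Real.exp y - Real.exp ((1 - ν) * x + ν * y) ∧
    (1 - ν) * Real.exp x + ν * Real.exp y - Real.exp ((1 - ν) * x + ν * y)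
      ≤ 1/2 * ν * (1 - ν) * (x - y)^2 * max (Real.exp x) (Real.exp y) :=
  ⟨strongConvexOn_exp_uIcc.le_jensen_gap left_mem_uIcc right_mem_uIcc hν,
    strongConcaveOn_exp_uIcc.jensen_gap_le left_mem_uIcc right_mem_uIcc hν⟩
end

section
/- Let A and B be positive operators on a complex Hilbert space such that k·I ≤ A^(−1/2)·B·A^(−1/2) ≤ K·I for some constants 0 < k ≤ K, and let ν ∈ [0,1]. Then exp((1/2)·ν·(1−ν)·(1 − min(1,K)/max(1,k))²)·A♯_ν B ≤ (1−ν)·A + ν·B ≤ exp((1/2)·ν·(1−ν)·(max(1,K)/min(1,k) − 1)²)·A♯_ν B in the operator order, where A♯_ν B = A^(1/2)·(A^(−1/2)·B·A^(−1/2))^ν·A^(1/2). -/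
/-! For `x > 0` the function `t ↦ log (1 - t + t x) + c t² / 2` has second derivative
`c - (x - 1)² / (1 - t + t x)²`, and `1 - t + t x` stays between `min 1 x` and `max 1 x`.
Hence it is concave on `[0, 1]` when `c ≤ (x - 1)² / (max 1 x)²` and convex when
`c ≥ (x - 1)² / (min 1 x)²`; comparing it with its chord at `t = ν` and exponentiating gives
`exp (ν (1 - ν) c / 2) x^ν ≤ 1 - ν + ν x`, resp. `≥`. For `k ≤ x ≤ K` the two constants of the
theorem are admissible choices of `c`. The continuous functional calculus transfers these scalar
inequalities to `C = A^(-1/2) B A^(-1/2)`, whose spectrum lies in `[k, K]`, and conjugating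
by `A^(1/2)` turns `(1 - ν) 1 + ν C` into `(1 - ν) A + ν B` and `C^ν` into `A ♯_ν B`. -/

open Real Set

section Scalar

variable {x c t : ℝ}

lemma hasDerivAt_one_sub_add_mul : HasDerivAt (fun t : ℝ => 1 - t + t * x) (x - 1) t :=
  (((hasDerivAt_id t).const_sub 1).add ((hasDerivAt_id t).mul_const x)).congr_deriv (by ring)

lemma hasDerivAt_log_one_sub_add_mul_add (hg : 0 < 1 - t + t * x) :
    HasDerivAt (fun t => log (1 - t + t * x) + c / 2 * t ^ 2)
      ((x - 1) / (1 - t + t * x) + c * t) t :=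
  ((hasDerivAt_one_sub_add_mul.log hg.ne').add
    ((hasDerivAt_pow 2 t).const_mul (c / 2))).congr_deriv (by ring)

lemma hasDerivAt_div_one_sub_add_mul_add (hg : 0 < 1 - t + t * x) :
    HasDerivAt (fun t => (x - 1) / (1 - t + t * x) + c * t)
      (c - (x - 1) ^ 2 / (1 - t + t * x) ^ 2) t :=
  (((hasDerivAt_const t (x - 1)).div hasDerivAt_one_sub_add_mul hg.ne').add
    ((hasDerivAt_id t).const_mul c)).congr_deriv (by ring)

lemma one_sub_add_mul_mem_Icc (ht : t ∈ Icc (0 : ℝ) 1) :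
    1 - t + t * x ∈ Icc (min 1 x) (max 1 x) := by
  have hmin := Convex.min_le_combo (1 : ℝ) x (sub_nonneg.2 ht.2) ht.1 (sub_add_cancel 1 t)
  have hmax := Convex.combo_le_max (1 : ℝ) x (sub_nonneg.2 ht.2) ht.1 (sub_add_cancel 1 t)
  simp only [smul_eq_mul, mul_one] at hmin hmax
  exact ⟨hmin, hmax⟩

lemma one_sub_add_mul_pos (hx : 0 < x) (ht : t ∈ Icc (0 : ℝ) 1) : 0 < 1 - t + t * x :=
  (lt_min one_pos hx).trans_le (one_sub_add_mul_mem_Icc ht).1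

lemma concaveOn_log_one_sub_add_mul_add (hx : 0 < x) (hc : c * max 1 x ^ 2 ≤ (x - 1) ^ 2) :
    ConcaveOn ℝ (Icc 0 1) fun t => log (1 - t + t * x) + c / 2 * t ^ 2 := by
  have hg := fun t (ht : t ∈ Icc (0 : ℝ) 1) => one_sub_add_mul_pos hx ht
  refine concaveOn_of_hasDerivWithinAt2_nonpos (convex_Icc 0 1)
    (fun t ht => (hasDerivAt_log_one_sub_add_mul_add (hg t ht)).continuousAt.continuousWithinAt)
    (fun t ht => (hasDerivAt_log_one_sub_add_mul_add (hg t (interior_subset ht))).hasDerivWithinAt)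
    (fun t ht => (hasDerivAt_div_one_sub_add_mul_add (hg t (interior_subset ht))).hasDerivWithinAt)
    fun t ht => ?_
  have ht := interior_subset ht
  have hsq : (1 - t + t * x) ^ 2 ≤ max 1 x ^ 2 :=
    pow_le_pow_left₀ (hg t ht).le (one_sub_add_mul_mem_Icc ht).2 2
  rw [sub_nonpos, le_div_iff₀ (pow_pos (hg t ht) 2)]
  rcases le_or_gt 0 c with hc0 | hc0
  · exact (mul_le_mul_of_nonneg_left hsq hc0).trans hc
  · exact (mul_nonpos_of_nonpos_of_nonneg hc0.le (sq_nonneg _)).trans (sq_nonneg _)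

lemma convexOn_log_one_sub_add_mul_add (hx : 0 < x) (hc : (x - 1) ^ 2 ≤ c * min 1 x ^ 2) :
    ConvexOn ℝ (Icc 0 1) fun t => log (1 - t + t * x) + c / 2 * t ^ 2 := by
  have hg := fun t (ht : t ∈ Icc (0 : ℝ) 1) => one_sub_add_mul_pos hx ht
  refine convexOn_of_hasDerivWithinAt2_nonneg (convex_Icc 0 1)
    (fun t ht => (hasDerivAt_log_one_sub_add_mul_add (hg t ht)).continuousAt.continuousWithinAt)
    (fun t ht => (hasDerivAt_log_one_sub_add_mul_add (hg t (interior_subset ht))).hasDerivWithinAt)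
    (fun t ht => (hasDerivAt_div_one_sub_add_mul_add (hg t (interior_subset ht))).hasDerivWithinAt)
    fun t ht => ?_
  have ht := interior_subset ht
  have hmin : 0 < min 1 x := lt_min one_pos hx
  have hsq : min 1 x ^ 2 ≤ (1 - t + t * x) ^ 2 :=
    pow_le_pow_left₀ hmin.le (one_sub_add_mul_mem_Icc ht).1 2
  have hc0 : 0 ≤ c := nonneg_of_mul_nonneg_left ((sq_nonneg _).trans hc) (pow_pos hmin 2)
  rw [sub_nonneg, div_le_iff₀ (pow_pos (hg t ht) 2)]
  exact hc.trans (mul_le_mul_of_nonneg_left hsq hc0)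

variable {ν : ℝ}

lemma add_le_log_one_sub_add_mul (hx : 0 < x) (hν : ν ∈ Icc (0 : ℝ) 1)
    (hc : c * max 1 x ^ 2 ≤ (x - 1) ^ 2) :
    ν * log x + c / 2 * (ν * (1 - ν)) ≤ log (1 - ν + ν * x) := by
  have h := (concaveOn_log_one_sub_add_mul_add hx hc).2 (left_mem_Icc.2 zero_le_one)
    (right_mem_Icc.2 zero_le_one) (sub_nonneg.2 hν.2) hν.1 (sub_add_cancel 1 ν)
  simp only [smul_eq_mul, mul_zero, mul_one, zero_add, sub_zero, zero_mul, add_zero, log_one,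
    ne_eq, OfNat.ofNat_ne_zero, not_false_eq_true, zero_pow, sub_self, one_mul, one_pow] at h
  linear_combination h

lemma log_one_sub_add_mul_le_add (hx : 0 < x) (hν : ν ∈ Icc (0 : ℝ) 1)
    (hc : (x - 1) ^ 2 ≤ c * min 1 x ^ 2) :
    log (1 - ν + ν * x) ≤ ν * log x + c / 2 * (ν * (1 - ν)) := by
  have h := (convexOn_log_one_sub_add_mul_add hx hc).2 (left_mem_Icc.2 zero_le_one)
    (right_mem_Icc.2 zero_le_one) (sub_nonneg.2 hν.2) hν.1 (sub_add_cancel 1 ν)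
  simp only [smul_eq_mul, mul_zero, mul_one, zero_add, sub_zero, zero_mul, add_zero, log_one,
    ne_eq, OfNat.ofNat_ne_zero, not_false_eq_true, zero_pow, sub_self, one_mul, one_pow] at h
  linear_combination h

theorem exp_mul_rpow_le_one_sub_add_mul (hx : 0 < x) (hν : ν ∈ Icc (0 : ℝ) 1)
    (hc : c * max 1 x ^ 2 ≤ (x - 1) ^ 2) :
    exp (1 / 2 * ν * (1 - ν) * c) * x ^ ν ≤ 1 - ν + ν * x := by
  rw [rpow_def_of_pos hx, ← exp_add, ← le_log_iff_exp_le (one_sub_add_mul_pos hx hν)]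
  linear_combination add_le_log_one_sub_add_mul hx hν hc

theorem one_sub_add_mul_le_exp_mul_rpow (hx : 0 < x) (hν : ν ∈ Icc (0 : ℝ) 1)
    (hc : (x - 1) ^ 2 ≤ c * min 1 x ^ 2) :
    1 - ν + ν * x ≤ exp (1 / 2 * ν * (1 - ν) * c) * x ^ ν := by
  rw [rpow_def_of_pos hx, ← exp_add, ← log_le_iff_le_exp (one_sub_add_mul_pos hx hν)]
  linear_combination log_one_sub_add_mul_le_add hx hν hc

end Scalar

section Constants

variable {k K x : ℝ}

lemma sq_one_sub_min_div_max_mul_sq_le (hk : 0 < k) (hkx : k ≤ x) (hxK : x ≤ K) :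
    (1 - min 1 K / max 1 k) ^ 2 * max 1 x ^ 2 ≤ (x - 1) ^ 2 := by
  have hMk : 0 < max 1 k := lt_max_of_lt_left one_pos
  have hmK : 0 < min 1 K := lt_min one_pos (hk.trans_le (hkx.trans hxK))
  have hr : min 1 K / max 1 k ≤ 1 :=
    div_le_one_of_le₀ ((min_le_left _ _).trans (le_max_left _ _)) hMk.le
  have hmx : min 1 x ≤ min 1 K / max 1 k * max 1 x := by
    rw [div_mul_eq_mul_div, le_div_iff₀ hMk]
    exact mul_le_mul (min_le_min_left 1 hxK) (max_le_max_left 1 hkx) hMk.le hmK.le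
  rw [← mul_pow, ← sq_abs (x - 1), ← max_sub_min_eq_abs]
  exact pow_le_pow_left₀ (mul_nonneg (sub_nonneg.2 hr) (zero_le_one.trans (le_max_left _ _)))
    (by linarith) 2

lemma sq_le_sq_max_div_min_sub_one_mul_sq (hk : 0 < k) (hkx : k ≤ x) (hxK : x ≤ K) :
    (x - 1) ^ 2 ≤ (max 1 K / min 1 k - 1) ^ 2 * min 1 x ^ 2 := by
  have hmk : 0 < min 1 k := lt_min one_pos hk
  have hMK : 0 < max 1 K := lt_max_of_lt_left one_pos
  have hMx : max 1 x ≤ max 1 K / min 1 k * min 1 x := by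
    rw [div_mul_eq_mul_div, le_div_iff₀ hmk]
    exact mul_le_mul (max_le_max_left 1 hxK) (min_le_min_left 1 hkx) hmk.le hMK.le
  rw [← mul_pow, ← sq_abs (x - 1), ← max_sub_min_eq_abs]
  exact pow_le_pow_left₀ (sub_nonneg.2 min_le_max) (by linarith) 2

end Constants

section CStarAlgebra

variable {A : Type*} [CStarAlgebra A]

lemma cfc_one_sub_add_mul {a : A} (ha : IsSelfAdjoint a) (ν : ℝ) :
    cfc (fun x : ℝ => 1 - ν + ν * x) a = (1 - ν) • 1 + ν • a := by
  rw [cfc_add a (fun _ => 1 - ν) (fun x => ν * x), cfc_const _ _ ha, cfc_const_mul_id ν a ha,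
    Algebra.algebraMap_eq_smul_one]

variable [PartialOrder A] [StarOrderedRing A]

lemma spectrum_subset_Icc_of_smul_one_le {a : A} {k K : ℝ} (ha : IsSelfAdjoint a)
    (hka : k • 1 ≤ a) (haK : a ≤ K • 1) : spectrum ℝ a ⊆ Icc k K := fun x hx =>
  ⟨(algebraMap_le_iff_le_spectrum ha).1 (by rwa [Algebra.algebraMap_eq_smul_one]) x hx,
    (le_algebraMap_iff_spectrum_le ha).1 (by rwa [Algebra.algebraMap_eq_smul_one]) x hx⟩

lemma smul_rpow_eq_cfc {a : A} (ha : 0 ≤ a) {ν : ℝ} (hν : 0 ≤ ν) (e : ℝ) :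
    e • a ^ ν = cfc (fun x : ℝ => e * x ^ ν) a := by
  rw [CFC.rpow_eq_cfc_real ha, ← cfc_const_mul e _ a (continuous_rpow_const hν).continuousOn]

lemma smul_rpow_le_one_sub_smul_add_smul {a : A} (ha : 0 ≤ a) {ν e : ℝ} (hν : 0 ≤ ν)
    (h : ∀ x ∈ spectrum ℝ a, e * x ^ ν ≤ 1 - ν + ν * x) :
    e • a ^ ν ≤ (1 - ν) • 1 + ν • a := by
  rw [smul_rpow_eq_cfc ha hν, ← cfc_one_sub_add_mul ha.isSelfAdjoint,
    cfc_le_iff (fun x : ℝ => e * x ^ ν) _ a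
      (continuous_const.mul (continuous_rpow_const hν)).continuousOn]
  exact h

lemma one_sub_smul_add_smul_le_smul_rpow {a : A} (ha : 0 ≤ a) {ν e : ℝ} (hν : 0 ≤ ν)
    (h : ∀ x ∈ spectrum ℝ a, 1 - ν + ν * x ≤ e * x ^ ν) :
    (1 - ν) • 1 + ν • a ≤ e • a ^ ν := by
  rw [smul_rpow_eq_cfc ha hν, ← cfc_one_sub_add_mul ha.isSelfAdjoint,
    cfc_le_iff _ (fun x : ℝ => e * x ^ ν) a (by fun_prop)
      (continuous_const.mul (continuous_rpow_const hν)).continuousOn]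
  exact h

lemma sqrt_mul_conj_rpow_neg_half_mul_sqrt {a : A} (ha : IsStrictlyPositive a) (b : A) :
    CFC.sqrt a * (a ^ (-(1 / 2) : ℝ) * b * a ^ (-(1 / 2) : ℝ)) * CFC.sqrt a = b := by
  rw [CFC.sqrt_eq_rpow, ← CFC.rpow_eq_pow,
    show ∀ s r : A, s * (r * b * r) * s = (s * r) * b * (r * s) by intros; noncomm_ring,
    CFC.rpow_eq_pow, CFC.rpow_mul_rpow_neg _ ha, CFC.rpow_neg_mul_rpow _ ha, one_mul, mul_one]

lemma sqrt_mul_one_sub_smul_add_smul_mul_sqrt {a : A} (ha : IsStrictlyPositive a) (b : A)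
    (ν : ℝ) :
    CFC.sqrt a * ((1 - ν) • 1 + ν • (a ^ (-(1 / 2) : ℝ) * b * a ^ (-(1 / 2) : ℝ))) *
      CFC.sqrt a = (1 - ν) • a + ν • b := by
  rw [mul_add, add_mul, mul_smul_comm, mul_smul_comm, smul_mul_assoc, smul_mul_assoc, mul_one,
    CFC.sqrt_mul_sqrt_self a ha.nonneg, sqrt_mul_conj_rpow_neg_half_mul_sqrt ha]

end CStarAlgebra

set_option synthInstance.maxHeartbeats 1000000 in
theorem stmt_16_general {H : Type*} [NormedAddCommGroup H] [InnerProductSpace ℂ H] [CompleteSpace H]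
    (A B : H →L[ℂ] H) (hA : 0 ≤ A) (hAinv : IsUnit A)
    (k K : ℝ) (hk : 0 < k) (ν : ℝ) (hν : ν ∈ Set.Icc (0:ℝ) 1)
    (hkC : k • (1 : H →L[ℂ] H) ≤ CFC.rpow A (-(1/2) : ℝ) * B * CFC.rpow A (-(1/2) : ℝ))
    (hCK : CFC.rpow A (-(1/2) : ℝ) * B * CFC.rpow A (-(1/2) : ℝ) ≤ K • (1 : H →L[ℂ] H)) :
    Real.exp (1/2 * ν * (1 - ν) * (1 - min 1 K / max 1 k)^2) •
        (CFC.sqrt A * CFC.rpow (CFC.rpow A (-(1/2) : ℝ) * B * CFC.rpow A (-(1/2) : ℝ)) ν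
          * CFC.sqrt A)
      ≤ (1 - ν) • A + ν • B ∧
    (1 - ν) • A + ν • B
      ≤ Real.exp (1/2 * ν * (1 - ν) * (max 1 K / min 1 k - 1)^2) •
        (CFC.sqrt A * CFC.rpow (CFC.rpow A (-(1/2) : ℝ) * B * CFC.rpow A (-(1/2) : ℝ)) ν
          * CFC.sqrt A) := by
  simp only [CFC.rpow_eq_pow] at hkC hCK ⊢
  have hA' : IsStrictlyPositive A := IsStrictlyPositive.iff_of_unital.2 ⟨hA, hAinv⟩
  have hC : 0 ≤ A ^ (-(1 / 2) : ℝ) * B * A ^ (-(1 / 2) : ℝ) :=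
    (smul_nonneg hk.le zero_le_one).trans hkC
  have hspec := spectrum_subset_Icc_of_smul_one_le hC.isSelfAdjoint hkC hCK
  have hconj := fun {X Y : H →L[ℂ] H} (h : X ≤ Y) =>
    conjugate_le_conjugate_of_nonneg h (CFC.sqrt_nonneg A)
  constructor
  · have h := hconj <| smul_rpow_le_one_sub_smul_add_smul hC hν.1 fun x hx =>
      exp_mul_rpow_le_one_sub_add_mul (hk.trans_le (hspec hx).1) hν
        (sq_one_sub_min_div_max_mul_sq_le hk (hspec hx).1 (hspec hx).2)
    rwa [mul_smul_comm, smul_mul_assoc, sqrt_mul_one_sub_smul_add_smul_mul_sqrt hA'] at h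
  · have h := hconj <| one_sub_smul_add_smul_le_smul_rpow hC hν.1 fun x hx =>
      one_sub_add_mul_le_exp_mul_rpow (hk.trans_le (hspec hx).1) hν
        (sq_le_sq_max_div_min_sub_one_mul_sq hk (hspec hx).1 (hspec hx).2)
    rwa [mul_smul_comm, smul_mul_assoc, sqrt_mul_one_sub_smul_add_smul_mul_sqrt hA'] at h

set_option synthInstance.maxHeartbeats 1000000 in
theorem stmt_16 {H : Type*} [NormedAddCommGroup H] [InnerProductSpace ℂ H] [CompleteSpace H]
    (A B : H →L[ℂ] H) (hA : 0 ≤ A) (hB : 0 ≤ B) (hAinv : IsUnit A)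
    (k K : ℝ) (hk : 0 < k) (hkK : k ≤ K) (ν : ℝ) (hν : ν ∈ Set.Icc (0:ℝ) 1)
    (hkC : k • (1 : H →L[ℂ] H) ≤ CFC.rpow A (-(1/2) : ℝ) * B * CFC.rpow A (-(1/2) : ℝ))
    (hCK : CFC.rpow A (-(1/2) : ℝ) * B * CFC.rpow A (-(1/2) : ℝ) ≤ K • (1 : H →L[ℂ] H)) :
    Real.exp (1/2 * ν * (1 - ν) * (1 - min 1 K / max 1 k)^2) •
        (CFC.sqrt A * CFC.rpow (CFC.rpow A (-(1/2) : ℝ) * B * CFC.rpow A (-(1/2) : ℝ)) ν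
          * CFC.sqrt A)
      ≤ (1 - ν) • A + ν • B ∧
    (1 - ν) • A + ν • B
      ≤ Real.exp (1/2 * ν * (1 - ν) * (max 1 K / min 1 k - 1)^2) •
        (CFC.sqrt A * CFC.rpow (CFC.rpow A (-(1/2) : ℝ) * B * CFC.rpow A (-(1/2) : ℝ)) ν
          * CFC.sqrt A) :=
  stmt_16_general A B hA hAinv k K hk ν hν hkC hCK
end

section
/- Let f be twice differentiable on an open interval containing [γ,Γ] with d ≤ f'' ≤ D there, where γ < 1 < Γ. Then for every selfadjoint operator X on a complex Hilbert space with spectrum contained in [γ,Γ] and every ν ∈ [0,1]: (1/2)·ν·(1−ν)·d·(X−I)² ≤ (1−ν)·f(1)·I + ν·f(X) − f((1−ν)·I + ν·X) ≤ (1/2)·ν·(1−ν)·D·(X−I)² in the operator order. -/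
/-!
If `d ≤ f''`, then `f t - d / 2 * t ^ 2` is convex, and its Jensen inequality for the points `s`, `t`
with weights `1 - ν`, `ν` is the lower bound, because
`(1 - ν) * s ^ 2 + ν * t ^ 2 - ((1 - ν) * s + ν * t) ^ 2 = ν * (1 - ν) * (t - s) ^ 2`;
applying this to `-f` gives the upper bound. With `s = 1`, all three operators in the claim are
continuous functions of `X`, so the operator inequalities follow from the scalar ones on the
spectrum of `X` by monotonicity of the continuous functional calculus.
-/

open Set

theorem convexOn_sub_half_mul_sq {S : Set ℝ} (hS : Convex ℝ S)
    {f f' f'' : ℝ → ℝ} (hf : ∀ t ∈ S, HasDerivAt f (f' t) t)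
    (hf' : ∀ t ∈ S, HasDerivAt f' (f'' t) t) {d : ℝ} (hd : ∀ t ∈ S, d ≤ f'' t) :
    ConvexOn ℝ S (fun t => f t - d / 2 * t ^ 2) := by
  have hg : ∀ t ∈ S, HasDerivAt (fun t => f t - d / 2 * t ^ 2) (f' t - d * t) t := fun t ht =>
    ((hf t ht).sub ((hasDerivAt_pow 2 t).const_mul (d / 2))).congr_deriv (by ring)
  have hg' : ∀ t ∈ S, HasDerivAt (fun t => f' t - d * t) (f'' t - d) t := fun t ht =>
    ((hf' t ht).sub ((hasDerivAt_id t).const_mul d)).congr_deriv (by ring)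
  exact convexOn_of_hasDerivWithinAt2_nonneg hS
    (fun t ht => (hg t ht).continuousAt.continuousWithinAt)
    (fun t ht => (hg t (interior_subset ht)).hasDerivWithinAt)
    (fun t ht => (hg' t (interior_subset ht)).hasDerivWithinAt)
    (fun t ht => sub_nonneg.2 (hd t (interior_subset ht)))

theorem half_mul_sq_le_jensenGap {S : Set ℝ} (hS : Convex ℝ S)
    {f f' f'' : ℝ → ℝ} (hf : ∀ t ∈ S, HasDerivAt f (f' t) t)
    (hf' : ∀ t ∈ S, HasDerivAt f' (f'' t) t) {d : ℝ} (hd : ∀ t ∈ S, d ≤ f'' t)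
    {s t : ℝ} (hs : s ∈ S) (ht : t ∈ S) {ν : ℝ} (hν0 : 0 ≤ ν) (hν1 : ν ≤ 1) :
    1 / 2 * ν * (1 - ν) * d * (t - s) ^ 2
      ≤ (1 - ν) * f s + ν * f t - f ((1 - ν) * s + ν * t) := by
  have hjensen := (convexOn_sub_half_mul_sq hS hf hf' hd).2 hs ht (sub_nonneg.2 hν1) hν0 (by ring)
  simp only [smul_eq_mul] at hjensen
  linear_combination hjensen

theorem jensenGap_le_half_mul_sq {S : Set ℝ} (hS : Convex ℝ S)
    {f f' f'' : ℝ → ℝ} (hf : ∀ t ∈ S, HasDerivAt f (f' t) t)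
    (hf' : ∀ t ∈ S, HasDerivAt f' (f'' t) t) {D : ℝ} (hD : ∀ t ∈ S, f'' t ≤ D)
    {s t : ℝ} (hs : s ∈ S) (ht : t ∈ S) {ν : ℝ} (hν0 : 0 ≤ ν) (hν1 : ν ≤ 1) :
    (1 - ν) * f s + ν * f t - f ((1 - ν) * s + ν * t)
      ≤ 1 / 2 * ν * (1 - ν) * D * (t - s) ^ 2 := by
  have hneg := half_mul_sq_le_jensenGap hS (fun t ht => (hf t ht).neg)
    (fun t ht => (hf' t ht).neg) (d := -D) (fun t ht => neg_le_neg (hD t ht)) hs ht hν0 hν1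
  simp only [Pi.neg_apply] at hneg
  linear_combination hneg

section

variable {A : Type*} [CStarAlgebra A]

theorem sub_one_sq_eq_cfc {X : A} (hX : IsSelfAdjoint X) :
    (X - 1) ^ 2 = cfc (fun t : ℝ => (t - 1) ^ 2) X := by
  rw [cfc_pow (fun t : ℝ => t - 1) 2 X, cfc_sub .., cfc_id' ℝ X, cfc_const_one ℝ X]

theorem jensenGap_eq_cfc (f : ℝ → ℝ) {X : A} (hX : IsSelfAdjoint X) (ν : ℝ)
    (hf : ContinuousOn f (spectrum ℝ X))
    (hfν : ContinuousOn f ((fun t => (1 - ν) + ν * t) '' spectrum ℝ X)) :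
    ((1 - ν) * f 1) • (1 : A) + ν • cfc f X - cfc f ((1 - ν) • (1 : A) + ν • X)
      = cfc (fun t => (1 - ν) * f 1 + ν * f t - f ((1 - ν) + ν * t)) X := by
  have hA : (1 - ν) • (1 : A) + ν • X = cfc (fun t : ℝ => (1 - ν) + ν * t) X := by
    rw [cfc_const_add .., cfc_const_mul_id .., Algebra.algebraMap_eq_smul_one]
  have hfν' : ContinuousOn (fun t => f ((1 - ν) + ν * t)) (spectrum ℝ X) :=
    hfν.comp (by fun_prop) (mapsTo_image _ _)
  rw [hA, ← cfc_comp' f _ X, cfc_sub .., cfc_const_add .., cfc_const_mul ..,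
    Algebra.algebraMap_eq_smul_one]

end

theorem stmt_18 {H : Type*} [NormedAddCommGroup H] [InnerProductSpace ℂ H] [CompleteSpace H]
    (J : Set ℝ) (hJ : J.OrdConnected) (f f' f'' : ℝ → ℝ)
    (hf : ∀ t ∈ interior J, HasDerivAt f (f' t) t)
    (hf' : ∀ t ∈ interior J, HasDerivAt f' (f'' t) t)
    (d D : ℝ) (hd : ∀ t ∈ interior J, d ≤ f'' t) (hD : ∀ t ∈ interior J, f'' t ≤ D)
    (γ Γ : ℝ) (hγ1 : γ < 1) (h1Γ : 1 < Γ) (hsub : Set.Icc γ Γ ⊆ interior J)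
    (X : H →L[ℂ] H) (hX : IsSelfAdjoint X) (hspec : spectrum ℝ X ⊆ Set.Icc γ Γ)
    (ν : ℝ) (hν : ν ∈ Set.Icc (0:ℝ) 1) :
    (1/2 * ν * (1 - ν) * d) • (X - 1)^2
      ≤ ((1 - ν) * f 1) • (1 : H →L[ℂ] H) + ν • cfc f X
          - cfc f ((1 - ν) • (1 : H →L[ℂ] H) + ν • X) ∧
    ((1 - ν) * f 1) • (1 : H →L[ℂ] H) + ν • cfc f X
          - cfc f ((1 - ν) • (1 : H →L[ℂ] H) + ν • X)
      ≤ (1/2 * ν * (1 - ν) * D) • (X - 1)^2 := by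
  obtain ⟨hν0, hν1⟩ := hν
  have hS : Convex ℝ (interior J) := hJ.convex.interior
  have h1 : (1 : ℝ) ∈ interior J := hsub ⟨hγ1.le, h1Γ.le⟩
  have hσ : spectrum ℝ X ⊆ interior J := hspec.trans hsub
  have hcont : ContinuousOn f (interior J) :=
    fun t ht => (hf t ht).continuousAt.continuousWithinAt
  have hmaps : MapsTo (fun t => (1 - ν) + ν * t) (spectrum ℝ X) (interior J) := fun t ht => by
    simpa using hS h1 (hσ ht) (sub_nonneg.2 hν1) hν0 (by ring)
  have hgap : ContinuousOn (fun t => (1 - ν) * f 1 + ν * f t - f ((1 - ν) + ν * t))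
      (spectrum ℝ X) :=
    (continuousOn_const.add (continuousOn_const.mul (hcont.mono hσ))).sub
      (hcont.comp (by fun_prop) hmaps)
  rw [jensenGap_eq_cfc f hX ν (hcont.mono hσ) (hcont.mono hmaps.image_subset),
    sub_one_sq_eq_cfc hX, ← cfc_const_mul .., ← cfc_const_mul ..]
  constructor
  · refine cfc_mono (fun t ht => ?_) (by fun_prop) hgap
    simpa using half_mul_sq_le_jensenGap hS hf hf' hd h1 (hσ ht) hν0 hν1
  · refine cfc_mono (fun t ht => ?_) hgap (by fun_prop)
    simpa using jensenGap_le_half_mul_sq hS hf hf' hD h1 (hσ ht) hν0 hν1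
end
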